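/- Let ε ≥ 0 and let v, w : ℤ/Nℤ → ℝ. Define the energy E = (1/2)·Σ_j [ w_j² + v_j² − 2ε·( v_j·v_{j+1} − v_j² ) ] (indices modulo N). Then E ≥ 0, and moreover ‖w‖² + ‖v‖² ≤ 2E, where ‖v‖² = Σ_j v_j². -/

import Mathlib

open Complex Finset Set

noncomputable section

/-- Discrete Laplacian with periodic boundary conditions on `ZMod N` (complex-valued). -/
def lapC {N : ℕ} (B : ZMod N → ℂ) (j : ZMod N) : ℂ :=
  B (j + 1) - 2 * B j + B (j - 1)

/-- ℓ² norm on `ZMod N` (complex-valued sequences). -/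
def l2C {N : ℕ} [NeZero N] (B : ZMod N → ℂ) : ℝ :=
  Real.sqrt (∑ j, ‖B j‖ ^ 2)

/-- Discrete Laplacian with periodic boundary conditions on `ZMod N` (real-valued). -/
def lapR {N : ℕ} (B : ZMod N → ℝ) (j : ZMod N) : ℝ :=
  B (j + 1) - 2 * B j + B (j - 1)

/-- ℓ² norm on `ZMod N` (real-valued sequences). -/
def l2R {N : ℕ} [NeZero N] (B : ZMod N → ℝ) : ℝ :=
  Real.sqrt (∑ j, (B j) ^ 2)

/-- `A` solves the damped, driven discrete nonlinear Schrödinger equation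
`i A_j' + 3ξ|A_j|²A_j − (Δ₂A)_j + i α̂ A_j − ĥ + ω A_j = 0` at every `τ ∈ s`,
with derivatives taken within `s`. -/
def SolvesDNLSOn {N : ℕ} (ξ a h ω : ℝ) (A : ℝ → ZMod N → ℂ) (s : Set ℝ) : Prop :=
  ∀ τ ∈ s, ∀ j, ∃ d : ℂ, HasDerivWithinAt (fun t => A t j) d s τ ∧
    Complex.I * d + 3 * (ξ : ℂ) * (((‖A τ j‖ : ℝ) : ℂ)) ^ 2 * A τ j
      - lapC (A τ) j + Complex.I * (a : ℂ) * A τ j - (h : ℂ) + (ω : ℂ) * A τ j = 0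

/-- `A` solves the damped, driven discrete nonlinear Schrödinger equation globally. -/
def SolvesDNLS {N : ℕ} (ξ a h ω : ℝ) (A : ℝ → ZMod N → ℂ) : Prop :=
  ∀ τ : ℝ, ∀ j, ∃ d : ℂ, HasDerivAt (fun t => A t j) d τ ∧
    Complex.I * d + 3 * (ξ : ℂ) * (((‖A τ j‖ : ℝ) : ℂ)) ^ 2 * A τ j
      - lapC (A τ) j + Complex.I * (a : ℂ) * A τ j - (h : ℂ) + (ω : ℂ) * A τ j = 0

/-- The real-valued rotating-wave (leading-order) approximation
`X_j(t) = 2 Re(√ε A_j(εt/2) e^{iΩt}) + (ξ ε^{3/2}/4) Re(A_j(εt/2)³ e^{3iΩt})`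
with `Ω = 1 − εω/2`. -/
def Xrw {N : ℕ} (ξ ω ε : ℝ) (A : ℝ → ZMod N → ℂ) (t : ℝ) (j : ZMod N) : ℝ :=
  2 * ((Real.sqrt ε : ℂ) * A (ε * t / 2) j
        * Complex.exp (Complex.I * (((1 - ε * ω / 2) * t : ℝ) : ℂ))).re
    + (ξ * ε ^ ((3:ℝ)/2) / 4) * ((A (ε * t / 2) j) ^ 3
        * Complex.exp (3 * Complex.I * (((1 - ε * ω / 2) * t : ℝ) : ℂ))).re

section ShiftedProducts

variable {G : Type*} [AddCommGroup G] [Fintype G]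

theorem sum_sq_sub_mul_add_eq_half_sum_sq_sub (a : G) (v : G → ℝ) :
    ∑ j, (v j ^ 2 - v j * v (j + a)) = (1 / 2) * ∑ j, (v j - v (j + a)) ^ 2 := by
  have hshift : ∑ j, v (j + a) ^ 2 = ∑ j, v j ^ 2 :=
    Equiv.sum_comp (Equiv.addRight a) fun j => v j ^ 2
  have hexpand : ∀ j, v j ^ 2 - v j * v (j + a)
      = (1 / 2) * (v j - v (j + a)) ^ 2 + (1 / 2) * (v j ^ 2 - v (j + a) ^ 2) :=
    fun j => by ring
  simp only [hexpand, Finset.sum_add_distrib, ← Finset.mul_sum, Finset.sum_sub_distrib, hshift,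
    sub_self, mul_zero, add_zero]

theorem sum_mul_add_le_sum_sq (a : G) (v : G → ℝ) :
    ∑ j, v j * v (j + a) ≤ ∑ j, v j ^ 2 := by
  have hnonneg : 0 ≤ ∑ j, (v j ^ 2 - v j * v (j + a)) := by
    rw [sum_sq_sub_mul_add_eq_half_sum_sq_sub]
    positivity
  rwa [Finset.sum_sub_distrib, sub_nonneg] at hnonneg

end ShiftedProducts

/-- the energy
`E = (1/2) Σ_j [w_j² + v_j² − 2ε(v_j v_{j+1} − v_j²)]` is nonnegative and controls the
ℓ² norms: `‖w‖² + ‖v‖² ≤ 2E`. -/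
theorem stmt_12 (N : ℕ) [NeZero N] (ε : ℝ) (hε : 0 ≤ ε) (v w : ZMod N → ℝ) :
    0 ≤ (1/2) * ∑ j, ((w j) ^ 2 + (v j) ^ 2 - 2 * ε * (v j * v (j + 1) - (v j) ^ 2)) ∧
    (∑ j, (w j) ^ 2) + (∑ j, (v j) ^ 2) ≤
      2 * ((1/2) * ∑ j, ((w j) ^ 2 + (v j) ^ 2
        - 2 * ε * (v j * v (j + 1) - (v j) ^ 2))) := by
  have hsplit : ∑ j, ((w j) ^ 2 + (v j) ^ 2 - 2 * ε * (v j * v (j + 1) - (v j) ^ 2))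
      = ∑ j, w j ^ 2 + ∑ j, v j ^ 2 + 2 * ε * (∑ j, v j ^ 2 - ∑ j, v j * v (j + 1)) := by
    simp only [Finset.sum_add_distrib, Finset.sum_sub_distrib, ← Finset.mul_sum]
    ring
  have hcoupling : 0 ≤ 2 * ε * (∑ j, v j ^ 2 - ∑ j, v j * v (j + 1)) :=
    mul_nonneg (by positivity) (sub_nonneg.mpr (sum_mul_add_le_sum_sq 1 v))
  have hw : 0 ≤ ∑ j, w j ^ 2 := by positivity
  have hv : 0 ≤ ∑ j, v j ^ 2 := by positivity
  rw [hsplit]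
  constructor <;> linarith
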